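/- Let $X$ be a finite probability space, $f: X \to \{0,1\}$, and let $\mathcal{B}'$ be a partition of $X$ refining a partition $\mathcal{B}$. Suppose every cell of $\mathcal{B}$ has probability at least $\mu > 0$, every cell of $\mathcal{B}'$ within a given cell $c$ of $\mathcal{B}$ has conditional probability (within $c$) at least $\nu > 0$, and suppose that for at least a fraction $\beta$ of the cells $c$ of $\mathcal{B}$ (weighted uniformly among cells, of which there are $N$), at least a fraction $\beta$ of the subcells $c' \subseteq c$ of $\mathcal{B}'$ satisfy $|\mathbb{E}[f|c'] - \mathbb{E}[f|c]| > \zeta$. Then $\mathbb{E}[(\mathbb{E}[f|\mathcal{B}'])^2] \geq \mathbb{E}[(\mathbb{E}[f|\mathcal{B}])^2] + \beta N \mu \cdot \frac{\beta \nu}{2} \cdot \zeta^2 / 2$; in particular the density index increases by a positive amount depending only on $\beta, \mu, \nu, \zeta$ (and $N$). -/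

import Mathlib

open scoped Classical

/-- Average of `f` on the cell `{x | B x = c}` (uniform measure). -/
noncomputable def cellAvg {X : Type*} [Fintype X] {β : Type*}
    (f : X → ℝ) (B : X → β) (c : β) : ℝ :=
  (∑ x ∈ Finset.univ.filter (fun x => B x = c), f x) /
    ((Finset.univ.filter (fun x => B x = c)).card : ℝ)

/-- Conditional expectation of `f` with respect to the partition induced by `B`. -/
noncomputable def condExp {X : Type*} [Fintype X] {β : Type*}
    (f : X → ℝ) (B : X → β) : X → ℝ := fun x => cellAvg f B (B x)

/-!
Since `condExp f B` is constant on the cells of the refinement `B'`, Pythagoras turns the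
increase of the index into `∑ x, (condExp f B' x - condExp f B x) ^ 2`, which is at least `ζ ^ 2`
times the number of points lying in a subcell whose average deviates by more than `ζ`. Each of
the at least `β N` good cells `c` contains at least `β` deviating subcells, each of size at least
`ν |c| ≥ ν μ |X|`, so there are at least `β N · β ν μ |X|` such points.
-/

open Finset

section

variable {X ι κ : Type*} [Fintype X]

theorem card_mul_cellAvg (f : X → ℝ) (B : X → ι) (c : ι) :
    (#{x | B x = c} : ℝ) * cellAvg f B c = ∑ x with B x = c, f x := by
  rcases eq_or_ne (#{x | B x = c} : ℝ) 0 with h | h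
  · rw [h, zero_mul, sum_eq_zero]
    intro x hx
    simp_all
  · exact mul_div_cancel₀ _ h

theorem sum_condExp_mul_comp [Fintype ι] (f : X → ℝ) (B : X → ι) (h : ι → ℝ) :
    ∑ x, condExp f B x * h (B x) = ∑ x, f x * h (B x) := by
  rw [← sum_fiberwise univ B, ← sum_fiberwise univ B (fun x => f x * h (B x))]
  refine sum_congr rfl fun c _ => ?_
  calc ∑ x with B x = c, condExp f B x * h (B x)
      = ∑ x with B x = c, cellAvg f B c * h c :=
        sum_congr rfl fun x hx => by rw [condExp, (mem_filter.1 hx).2]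
    _ = (∑ x with B x = c, f x) * h c := by
        rw [sum_const, nsmul_eq_mul, ← mul_assoc, card_mul_cellAvg]
    _ = ∑ x with B x = c, f x * h (B x) := by
        rw [sum_mul]
        exact sum_congr rfl fun x hx => by rw [(mem_filter.1 hx).2]

theorem sum_sq_condExp_sub_of_refines [Fintype ι] [Fintype κ] (f : X → ℝ) {B : X → ι}
    {B' : X → κ} {π : κ → ι} (hπ : ∀ x, π (B' x) = B x) :
    ∑ x, (condExp f B' x - condExp f B x) ^ 2 =
      ∑ x, condExp f B' x ^ 2 - ∑ x, condExp f B x ^ 2 := by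
  have hcross : ∑ x, condExp f B' x * condExp f B x = ∑ x, f x * condExp f B x := by
    simpa only [condExp, Function.comp_apply, hπ] using
      sum_condExp_mul_comp f B' (cellAvg f B ∘ π)
  have hdiag : ∑ x, condExp f B x ^ 2 = ∑ x, f x * condExp f B x := by
    simp only [sq]
    exact sum_condExp_mul_comp f B (cellAvg f B)
  simp only [sub_sq, sum_add_distrib, sum_sub_distrib, mul_assoc, ← mul_sum, hcross, ← hdiag]
  ring

theorem sq_mul_card_lt_abs_le_sum_sq {ζ : ℝ} (hζ : 0 ≤ ζ) (g : X → ℝ) :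
    ζ ^ 2 * #{x | ζ < |g x|} ≤ ∑ x, g x ^ 2 :=
  calc ζ ^ 2 * #{x | ζ < |g x|} = ∑ x with ζ < |g x|, ζ ^ 2 := by
        rw [sum_const, nsmul_eq_mul, mul_comm]
    _ ≤ ∑ x with ζ < |g x|, g x ^ 2 := sum_le_sum fun x hx => by
        rw [← sq_abs (g x)]
        exact pow_le_pow_left₀ hζ (mem_filter.1 hx).2.le 2
    _ ≤ ∑ x, g x ^ 2 :=
        sum_le_sum_of_subset_of_nonneg (filter_subset _ _) fun _ _ _ => sq_nonneg _

variable [Fintype κ] {B : X → ι} {B' : X → κ} {π : κ → ι}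

theorem card_filter_cell_eq_sum_card_subcells (hπ : ∀ x, π (B' x) = B x) (p : κ → Prop)
    (c : ι) : #{x | B x = c ∧ p (B' x)} = ∑ c' with π c' = c ∧ p c', #{x | B' x = c'} := by
  rw [card_eq_sum_card_fiberwise (f := B') (t := {c' | π c' = c ∧ p c'})
    fun x hx => by simp_all]
  refine sum_congr rfl fun c' hc' => congrArg card (ext fun x => ?_)
  simp only [mem_filter, mem_univ, true_and] at hc' ⊢
  constructor
  · exact And.right
  · rintro rfl
    exact ⟨⟨hπ x ▸ hc'.1, hc'.2⟩, rfl⟩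

theorem mul_card_cell_le_card_filter_cell (hπ : ∀ x, π (B' x) = B x) {β ν : ℝ}
    (hβ : 0 ≤ β) (hν : 0 ≤ ν) (hsub : ∀ c', ν * #{x | B x = π c'} ≤ #{x | B' x = c'})
    {p : κ → Prop} {c : ι} (hc : β * #{c' | π c' = c} ≤ #{c' | π c' = c ∧ p c'}) :
    β * ν * #{x | B x = c} ≤ #{x | B x = c ∧ p (B' x)} := by
  obtain hempty | ⟨x, hx⟩ := ({x | B x = c} : Finset X).eq_empty_or_nonempty
  · rw [hempty, card_empty, Nat.cast_zero, mul_zero]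
    positivity
  have hsubcell : (1 : ℝ) ≤ #{c' | π c' = c} :=
    Nat.one_le_cast.2 (card_pos.2 ⟨B' x, by simp_all⟩)
  calc β * ν * #{x | B x = c}
      ≤ #{c' | π c' = c ∧ p c'} * (ν * #{x | B x = c}) := by
        rw [mul_assoc]
        gcongr
        exact (le_mul_of_one_le_right hβ hsubcell).trans hc
    _ = ∑ c' with π c' = c ∧ p c', ν * #{x | B x = c} := by
        rw [sum_const, nsmul_eq_mul]
    _ ≤ #{x | B x = c ∧ p (B' x)} := by
        rw [card_filter_cell_eq_sum_card_subcells hπ, Nat.cast_sum]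
        exact sum_le_sum fun c' hc' => (mem_filter.1 hc').2.1 ▸ hsub c'

theorem sum_mul_card_cell_le_card_filter [Fintype ι] (hπ : ∀ x, π (B' x) = B x) {β ν : ℝ}
    (hβ : 0 ≤ β) (hν : 0 ≤ ν) (hsub : ∀ c', ν * #{x | B x = π c'} ≤ #{x | B' x = c'})
    (q : ι → κ → Prop) :
    ∑ c with β * #{c' | π c' = c} ≤ #{c' | π c' = c ∧ q c c'}, β * ν * #{x | B x = c} ≤
      #{x | q (B x) (B' x)} := by
  have hfibres : #{x | q (B x) (B' x)} = ∑ c, #{x | B x = c ∧ q c (B' x)} := by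
    rw [card_eq_sum_card_fiberwise (f := B) (t := univ) fun _ _ => mem_univ _]
    refine sum_congr rfl fun c _ => congrArg card (ext fun x => ?_)
    simp only [mem_filter, mem_univ, true_and]
    constructor
    · rintro ⟨hq, rfl⟩
      exact ⟨rfl, hq⟩
    · rintro ⟨rfl, hq⟩
      exact ⟨hq, rfl⟩
  rw [hfibres, Nat.cast_sum]
  calc _ ≤ ∑ c with β * #{c' | π c' = c} ≤ #{c' | π c' = c ∧ q c c'},
          (#{x | B x = c ∧ q c (B' x)} : ℝ) :=
        sum_le_sum fun c hc =>
          mul_card_cell_le_card_filter_cell hπ hβ hν hsub (mem_filter.1 hc).2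
    _ ≤ _ := sum_le_sum_of_subset_of_nonneg (filter_subset _ _) fun _ _ _ => Nat.cast_nonneg _

end

theorem index_increase_of_nonrepresenting_general {X : Type*} [Fintype X] [Nonempty X]
    {β' γ : Type*} [Fintype β'] [Fintype γ]
    (f : X → ℝ)
    (B : X → β') (B' : X → γ) (π : γ → β') (hπ : ∀ x, π (B' x) = B x)
    (μ ν ζ β : ℝ) (hμ : 0 < μ) (hν : 0 < ν) (hζ : 0 < ζ) (hβ : 0 < β)
    (hcell : ∀ c : β', μ ≤ ((Finset.univ.filter (fun x => B x = c)).card : ℝ) /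
      (Fintype.card X : ℝ))
    (hsub : ∀ c' : γ, ν ≤ ((Finset.univ.filter (fun x => B' x = c')).card : ℝ) /
      ((Finset.univ.filter (fun x => B x = π c')).card : ℝ))
    (hdev : β * (Fintype.card β' : ℝ) ≤
      ((Finset.univ.filter (fun c : β' =>
        β * ((Finset.univ.filter (fun c' : γ => π c' = c)).card : ℝ) ≤
          ((Finset.univ.filter (fun c' : γ => π c' = c ∧
            ζ < |cellAvg f B' c' - cellAvg f B c|)).card : ℝ))).card : ℝ)) :
    (∑ x, (condExp f B' x) ^ 2) / (Fintype.card X : ℝ)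
      ≥ (∑ x, (condExp f B x) ^ 2) / (Fintype.card X : ℝ)
        + β * (Fintype.card β' : ℝ) * μ * (β * ν / 2) * ζ ^ 2 / 2 := by
  set n : ℝ := (Fintype.card X : ℝ)
  have hn : 0 < n := Nat.cast_pos.2 Fintype.card_pos
  have hcell_card : ∀ c, μ * n ≤ #{x | B x = c} := fun c => (le_div_iff₀ hn).1 (hcell c)
  have hsub_card : ∀ c', ν * #{x | B x = π c'} ≤ #{x | B' x = c'} := fun c' =>
    (le_div_iff₀ ((mul_pos hμ hn).trans_le (hcell_card _))).1 (hsub c')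
  have hcount : β * Fintype.card β' * (β * ν * (μ * n)) ≤
      #{x | ζ < |condExp f B' x - condExp f B x|} :=
    calc _ ≤ #{c | β * #{c' | π c' = c} ≤ #{c' | π c' = c ∧
              ζ < |cellAvg f B' c' - cellAvg f B c|}} * (β * ν * (μ * n)) :=
          mul_le_mul_of_nonneg_right hdev (by positivity)
      _ ≤ ∑ c with β * #{c' | π c' = c} ≤ #{c' | π c' = c ∧
              ζ < |cellAvg f B' c' - cellAvg f B c|}, β * ν * #{x | B x = c} := by
          rw [← nsmul_eq_mul]
          exact card_nsmul_le_sum _ _ _ fun c _ => by gcongr; exact hcell_card c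
      _ ≤ _ := sum_mul_card_cell_le_card_filter hπ hβ.le hν.le hsub_card
          fun c c' => ζ < |cellAvg f B' c' - cellAvg f B c|
  have henergy := sq_mul_card_lt_abs_le_sum_sq hζ.le fun x => condExp f B' x - condExp f B x
  rw [sum_sq_condExp_sub_of_refines f hπ] at henergy
  rw [ge_iff_le, div_add' _ _ _ hn.ne', div_le_div_iff_of_pos_right hn]
  have hbound : 0 ≤ β * Fintype.card β' * μ * (β * ν) * ζ ^ 2 * n := by positivity
  linarith [mul_le_mul_of_nonneg_left hcount (sq_nonneg ζ)]

/-- If a `β`-fraction of the cells of `𝓑` have a `β`-fraction of their subcells (in the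
refinement `𝓑'`, with cell-to-cell map `π`) whose average of `f` deviates from the cell
average by more than `ζ`, and all cells have probability at least `μ` while subcells have
conditional probability at least `ν`, then the density index increases by at least
`β N μ (β ν / 2) ζ² / 2`, where `N` is the number of cells of `𝓑`. -/
theorem index_increase_of_nonrepresenting {X : Type*} [Fintype X] [Nonempty X]
    {β' γ : Type*} [Fintype β'] [Fintype γ]
    (f : X → ℝ) (hf : ∀ x, f x = 0 ∨ f x = 1)
    (B : X → β') (B' : X → γ) (π : γ → β') (hπ : ∀ x, π (B' x) = B x)
    (μ ν ζ β : ℝ) (hμ : 0 < μ) (hν : 0 < ν) (hζ : 0 < ζ) (hβ : 0 < β)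
    (hcell : ∀ c : β', μ ≤ ((Finset.univ.filter (fun x => B x = c)).card : ℝ) /
      (Fintype.card X : ℝ))
    (hsub : ∀ c' : γ, ν ≤ ((Finset.univ.filter (fun x => B' x = c')).card : ℝ) /
      ((Finset.univ.filter (fun x => B x = π c')).card : ℝ))
    (hdev : β * (Fintype.card β' : ℝ) ≤
      ((Finset.univ.filter (fun c : β' =>
        β * ((Finset.univ.filter (fun c' : γ => π c' = c)).card : ℝ) ≤
          ((Finset.univ.filter (fun c' : γ => π c' = c ∧
            ζ < |cellAvg f B' c' - cellAvg f B c|)).card : ℝ))).card : ℝ)) :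
    (∑ x, (condExp f B' x) ^ 2) / (Fintype.card X : ℝ)
      ≥ (∑ x, (condExp f B x) ^ 2) / (Fintype.card X : ℝ)
        + β * (Fintype.card β' : ℝ) * μ * (β * ν / 2) * ζ ^ 2 / 2 :=
  index_increase_of_nonrepresenting_general f B B' π hπ μ ν ζ β hμ hν hζ hβ hcell hsub hdev
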